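/- Let 𝒞 and 𝒟 be finitely complete categories and F : 𝒟 → 𝒞 a functor which preserves pullbacks and reflects isomorphisms. If 𝒞 is a majority category, then 𝒟 is a majority category. -/

import Mathlib

open CategoryTheory CategoryTheory.Limits

/-- The triple of morphisms `(a, b, c)` is related by the ternary relation
`(r₁, r₂, r₃)`. -/
def TernaryRelated {C : Type*} [Category C] {R A B D S : C}
    (r₁ : R ⟶ A) (r₂ : R ⟶ B) (r₃ : R ⟶ D) (a : S ⟶ A) (b : S ⟶ B) (c : S ⟶ D) : Prop :=
  ∃ f : S ⟶ R, f ≫ r₁ = a ∧ f ≫ r₂ = b ∧ f ≫ r₃ = c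

/-- A category is a majority category when every (jointly monomorphic) internal ternary
relation is strictly closed with respect to the majority matrix. -/
def IsMajorityCategory (C : Type*) [Category C] : Prop :=
  ∀ ⦃A B D R : C⦄ (r₁ : R ⟶ A) (r₂ : R ⟶ B) (r₃ : R ⟶ D),
    (∀ ⦃S : C⦄ (f g : S ⟶ R),
      f ≫ r₁ = g ≫ r₁ → f ≫ r₂ = g ≫ r₂ → f ≫ r₃ = g ≫ r₃ → f = g) →
    ∀ ⦃S : C⦄ (a₁ a₂ : S ⟶ A) (b₁ b₂ : S ⟶ B) (c₁ c₂ : S ⟶ D),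
      TernaryRelated r₁ r₂ r₃ a₁ b₁ c₂ →
      TernaryRelated r₁ r₂ r₃ a₁ b₂ c₁ →
      TernaryRelated r₁ r₂ r₃ a₂ b₁ c₁ →
      TernaryRelated r₁ r₂ r₃ a₁ b₁ c₁

/-!
Embed a jointly monic relation `R` in `D` as a monomorphism `m : R ⟶ A × B × E`, where the
product is assembled from pullbacks over the terminal object so that `F` still sends its
projections to a jointly monic family. Hence `F` carries the relation to a relation in `C`, where
the majority property factors `F ⟨a₁, b₁, c₁⟩` through `F m`. The pullback of `m` along
`⟨a₁, b₁, c₁⟩` is then a monomorphism whose image under `F` is split epi, hence an isomorphism;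
as `F` reflects isomorphisms, `⟨a₁, b₁, c₁⟩` factors through `m`.
-/

def JointlyMono₃ {C : Type*} [Category C] {R A B E : C}
    (r₁ : R ⟶ A) (r₂ : R ⟶ B) (r₃ : R ⟶ E) : Prop :=
  ∀ ⦃S : C⦄ (f g : S ⟶ R), f ≫ r₁ = g ≫ r₁ → f ≫ r₂ = g ≫ r₂ → f ≫ r₃ = g ≫ r₃ → f = g

lemma TernaryRelated.map {C : Type*} [Category C] {D : Type*} [Category D] (F : D ⥤ C)
    {R A B E S : D} {r₁ : R ⟶ A} {r₂ : R ⟶ B} {r₃ : R ⟶ E}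
    {a : S ⟶ A} {b : S ⟶ B} {c : S ⟶ E} (h : TernaryRelated r₁ r₂ r₃ a b c) :
    TernaryRelated (F.map r₁) (F.map r₂) (F.map r₃) (F.map a) (F.map b) (F.map c) := by
  obtain ⟨f, ha, hb, hc⟩ := h
  exact ⟨F.map f, by rw [← F.map_comp, ha], by rw [← F.map_comp, hb], by rw [← F.map_comp, hc]⟩

namespace CategoryTheory.Functor

variable {C : Type*} [Category C] {D : Type*} [Category D] (F : D ⥤ C)

lemma map_pullback_hom_ext {X Y Z : D} {f : X ⟶ Z} {g : Y ⟶ Z} [HasPullback f g]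
    [PreservesLimit (cospan f g) F] {T : C} {x y : T ⟶ F.obj (pullback f g)}
    (h₁ : x ≫ F.map (pullback.fst f g) = y ≫ F.map (pullback.fst f g))
    (h₂ : x ≫ F.map (pullback.snd f g) = y ≫ F.map (pullback.snd f g)) : x = y := by
  have := hasPullback_of_preservesPullback F f g
  rw [← cancel_mono (PreservesPullback.iso F f g).hom]
  apply pullback.hom_ext <;> simpa

lemma exists_comp_eq_of_comp_map_eq [PreservesLimitsOfShape WalkingCospan F]
    [F.ReflectsIsomorphisms] {R P S : D} (m : R ⟶ P) [Mono m] (u : S ⟶ P) [HasPullback m u]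
    (f : F.obj S ⟶ F.obj R) (hf : f ≫ F.map m = F.map u) : ∃ g : S ⟶ R, g ≫ m = u := by
  have := hasPullback_of_preservesPullback F m u
  have : IsSplitEpi (F.map (pullback.snd m u)) :=
    ⟨⟨⟨pullback.lift f (𝟙 _) (by simpa) ≫ (PreservesPullback.iso F m u).inv, by
      rw [Category.assoc, PreservesPullback.iso_inv_snd]
      exact pullback.lift_snd _ _ _⟩⟩⟩
  have : IsIso (F.map (pullback.snd m u)) := isIso_of_mono_of_isSplitEpi _
  have : IsIso (pullback.snd m u) := isIso_of_reflects_iso _ F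
  exact ⟨(asIso (pullback.snd m u)).inv ≫ pullback.fst m u, by simp [pullback.condition]⟩

end CategoryTheory.Functor

section TripleProd

variable {D : Type*} [Category D] [HasTerminal D] [HasPullbacks D]

/-- `A × B × E` as an iterated pullback over `⊤_ D`: a pullback-preserving functor need not
preserve the terminal object, but it still preserves this limit cone. -/
noncomputable abbrev tripleProd (A B E : D) : D :=
  pullback (terminal.from A) (terminal.from (pullback (terminal.from B) (terminal.from E)))

namespace tripleProd

variable {A B E : D}

noncomputable abbrev fst : tripleProd A B E ⟶ A := pullback.fst _ _

noncomputable abbrev snd : tripleProd A B E ⟶ B := pullback.snd _ _ ≫ pullback.fst _ _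

noncomputable abbrev thd : tripleProd A B E ⟶ E := pullback.snd _ _ ≫ pullback.snd _ _

noncomputable abbrev lift {S : D} (a : S ⟶ A) (b : S ⟶ B) (c : S ⟶ E) :
    S ⟶ tripleProd A B E :=
  pullback.lift a (pullback.lift b c (Subsingleton.elim _ _)) (Subsingleton.elim _ _)

variable {S : D} (a : S ⟶ A) (b : S ⟶ B) (c : S ⟶ E)

@[simp] lemma lift_fst : lift a b c ≫ fst = a := pullback.lift_fst _ _ _

@[simp] lemma lift_snd : lift a b c ≫ snd = b := by
  rw [pullback.lift_snd_assoc]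
  exact pullback.lift_fst _ _ _

@[simp] lemma lift_thd : lift a b c ≫ thd = c := by
  rw [pullback.lift_snd_assoc]
  exact pullback.lift_snd _ _ _

lemma map_hom_ext {C : Type*} [Category C] (F : D ⥤ C) [PreservesLimitsOfShape WalkingCospan F]
    {T : C} {x y : T ⟶ F.obj (tripleProd A B E)} (h₁ : x ≫ F.map fst = y ≫ F.map fst)
    (h₂ : x ≫ F.map snd = y ≫ F.map snd) (h₃ : x ≫ F.map thd = y ≫ F.map thd) : x = y := by
  refine F.map_pullback_hom_ext h₁ (F.map_pullback_hom_ext ?_ ?_)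
  · simpa only [F.map_comp, Category.assoc] using h₂
  · simpa only [F.map_comp, Category.assoc] using h₃

end tripleProd

end TripleProd

namespace JointlyMono₃

variable {D : Type*} [Category D] [HasTerminal D] [HasPullbacks D] {R A B E : D}
  {r₁ : R ⟶ A} {r₂ : R ⟶ B} {r₃ : R ⟶ E}

lemma mono_lift (hr : JointlyMono₃ r₁ r₂ r₃) : Mono (tripleProd.lift r₁ r₂ r₃) :=
  ⟨fun f g h ↦ hr f g (by simpa using h =≫ tripleProd.fst) (by simpa using h =≫ tripleProd.snd)
    (by simpa using h =≫ tripleProd.thd)⟩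

lemma map (hr : JointlyMono₃ r₁ r₂ r₃) {C : Type*} [Category C] (F : D ⥤ C)
    [PreservesLimitsOfShape WalkingCospan F] :
    JointlyMono₃ (F.map r₁) (F.map r₂) (F.map r₃) := by
  have := hr.mono_lift
  intro S f g h₁ h₂ h₃
  rw [← cancel_mono (F.map (tripleProd.lift r₁ r₂ r₃))]
  apply tripleProd.map_hom_ext F
  · simpa only [Category.assoc, ← F.map_comp, tripleProd.lift_fst] using h₁
  · simpa only [Category.assoc, ← F.map_comp, tripleProd.lift_snd] using h₂
  · simpa only [Category.assoc, ← F.map_comp, tripleProd.lift_thd] using h₃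

end JointlyMono₃

theorem majority_reflects_general {C : Type*} [Category C] {D : Type*} [Category D]
    [HasFiniteLimits D]
    (F : D ⥤ C) [PreservesLimitsOfShape WalkingCospan F] [F.ReflectsIsomorphisms]
    (hmaj : IsMajorityCategory C) : IsMajorityCategory D := by
  intro A B E R r₁ r₂ r₃ (hr : JointlyMono₃ r₁ r₂ r₃) S a₁ a₂ b₁ b₂ c₁ c₂ h₁ h₂ h₃
  have := hr.mono_lift
  obtain ⟨f, hf₁, hf₂, hf₃⟩ := hmaj (F.map r₁) (F.map r₂) (F.map r₃) (hr.map F)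
    (F.map a₁) (F.map a₂) (F.map b₁) (F.map b₂) (F.map c₁) (F.map c₂)
    (h₁.map F) (h₂.map F) (h₃.map F)
  obtain ⟨g, hg⟩ := F.exists_comp_eq_of_comp_map_eq (tripleProd.lift r₁ r₂ r₃)
    (tripleProd.lift a₁ b₁ c₁) f <| tripleProd.map_hom_ext F
      (by simpa only [Category.assoc, ← F.map_comp, tripleProd.lift_fst] using hf₁)
      (by simpa only [Category.assoc, ← F.map_comp, tripleProd.lift_snd] using hf₂)
      (by simpa only [Category.assoc, ← F.map_comp, tripleProd.lift_thd] using hf₃)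
  exact ⟨g, by simpa using hg =≫ tripleProd.fst, by simpa using hg =≫ tripleProd.snd,
    by simpa using hg =≫ tripleProd.thd⟩

/-- If `F : D ⥤ C` preserves pullbacks and reflects isomorphisms between finitely
complete categories, and `C` is a majority category, then so is `D`. -/
theorem majority_reflects {C : Type*} [Category C] {D : Type*} [Category D]
    [HasFiniteLimits C] [HasFiniteLimits D]
    (F : D ⥤ C) [PreservesLimitsOfShape WalkingCospan F] [F.ReflectsIsomorphisms]
    (hmaj : IsMajorityCategory C) : IsMajorityCategory D :=
  majority_reflects_general F hmaj
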